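/- (No Triangles) Let R be a blind bisimulation on the nodes of a λ-graph. Let n, m, m' be nodes and τ a non-empty trace such that n R m and there is a path from m to m' with trace τ. Then n R m' does not hold. -/
import Mathlib


/-- Directions for paths in a λ-graph. -/
inductive Dir : Type where
  | left | body | right
deriving DecidableEq

/-- Labels of nodes of a (pre–)λ-graph. -/
inductive NodeLabel (Node Name : Type) : Type where
  | app (l r : Node)
  | abs (body : Node)
  | fvar (name : Name)
  | bvar (binder : Node)

/-- The four kinds of nodes. -/
inductive NodeKind : Type where
  | app | abs | fvar | bvar
deriving DecidableEq

/-- The kind of a node label. -/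
def NodeLabel.kind {Node Name : Type} : NodeLabel Node Name → NodeKind
  | .app _ _ => .app
  | .abs _ => .abs
  | .fvar _ => .fvar
  | .bvar _ => .bvar

/-- Locally nameless λ-terms. -/
inductive Term (Name : Type) : Type where
  | bvar (i : ℕ)
  | fvar (a : Name)
  | app (t s : Term Name)
  | lam (t : Term Name)

/-- Reflexive–symmetric–transitive closure `R*` of a relation. -/
inductive RstClosure {α : Type _} (R : α → α → Prop) : α → α → Prop where
  | base {a b : α} : R a b → RstClosure R a b
  | refl (a : α) : RstClosure R a a
  | symm {a b : α} : RstClosure R a b → RstClosure R b a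
  | trans {a b c : α} : RstClosure R a b → RstClosure R b c → RstClosure R a c

/-- A pre–λ-graph: every node carries a label; the binder of a bound variable node is an
abstraction node; the name of a free variable node uniquely identifies it. -/
structure PreLamGraph (Node Name : Type) : Type where
  label : Node → NodeLabel Node Name
  binder_abs : ∀ n l, label n = .bvar l → ∃ b, label l = .abs b
  fvar_inj : ∀ n m a, label n = .fvar a → label m = .fvar a → n = m

namespace PreLamGraph

variable {Node Name : Type}

/-- `Path G τ n m`: there is a path from `n` to `m` with trace `τ`
(binding edges are never followed). -/
inductive Path (G : PreLamGraph Node Name) : List Dir → Node → Node → Prop where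
  | nil (n : Node) : Path G [] n n
  | abs {τ : List Dir} {n m b : Node} :
      Path G τ n m → G.label m = .abs b → Path G (.body :: τ) n b
  | appL {τ : List Dir} {n m l r : Node} :
      Path G τ n m → G.label m = .app l r → Path G (.left :: τ) n l
  | appR {τ : List Dir} {n m l r : Node} :
      Path G τ n m → G.label m = .app l r → Path G (.right :: τ) n r

/-- `r` is a root: the only path ending at `r` is the empty path from `r` itself. -/
def Root (G : PreLamGraph Node Name) (r : Node) : Prop :=
  ∀ (τ : List Dir) (n : Node), G.Path τ n r → τ = []

/-- `Crosses G τ n p`: the path from `n` with trace `τ` crosses the node `p`. -/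
inductive Crosses (G : PreLamGraph Node Name) : List Dir → Node → Node → Prop where
  | here {τ : List Dir} {n p : Node} : G.Path τ n p → Crosses G τ n p
  | step {d : Dir} {τ : List Dir} {n p m : Node} :
      Crosses G τ n p → G.Path (d :: τ) n m → Crosses G (d :: τ) n p

/-- `m` dominates `n`: every path from a root to `n` crosses `m`. -/
def Dominates (G : PreLamGraph Node Name) (m n : Node) : Prop :=
  ∀ (r : Node) (τ : List Dir), G.Root r → G.Path τ r n → G.Crosses τ r m

/-- Acyclicity: a path from a node to itself must have empty trace. -/
def Acyclic (G : PreLamGraph Node Name) : Prop :=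
  ∀ (n : Node) (τ : List Dir), G.Path τ n n → τ = []

/-- Every bound variable node is dominated by its binder. -/
def Dominated (G : PreLamGraph Node Name) : Prop :=
  ∀ (n l : Node), G.label n = .bvar l → G.Dominates l n

/-- A query relates only root nodes. -/
def IsQuery (G : PreLamGraph Node Name) (Q : Node → Node → Prop) : Prop :=
  ∀ n m, Q n m → G.Root n ∧ G.Root m

/-- A relation is homogeneous if it only relates nodes of the same kind. -/
def Homogeneous (G : PreLamGraph Node Name) (R : Node → Node → Prop) : Prop :=
  ∀ n m, R n m → (G.label n).kind = (G.label m).kind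

/-- Closure under the left propagation rule. -/
def ClosedAppL (G : PreLamGraph Node Name) (R : Node → Node → Prop) : Prop :=
  ∀ n m n1 n2 m1 m2, G.label n = .app n1 n2 → G.label m = .app m1 m2 → R n m → R n1 m1

/-- Closure under the right propagation rule. -/
def ClosedAppR (G : PreLamGraph Node Name) (R : Node → Node → Prop) : Prop :=
  ∀ n m n1 n2 m1 m2, G.label n = .app n1 n2 → G.label m = .app m1 m2 → R n m → R n2 m2

/-- Closure under the body propagation rule. -/
def ClosedAbs (G : PreLamGraph Node Name) (R : Node → Node → Prop) : Prop :=
  ∀ n m n' m', G.label n = .abs n' → G.label m = .abs m' → R n m → R n' m'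

/-- Closure under the scoping rule. -/
def ClosedScope (G : PreLamGraph Node Name) (R : Node → Node → Prop) : Prop :=
  ∀ n m l l', G.label n = .bvar l → G.label m = .bvar l' → R n m → R l l'

/-- Closure under the three propagation rules. -/
def ClosedProp (G : PreLamGraph Node Name) (R : Node → Node → Prop) : Prop :=
  G.ClosedAppL R ∧ G.ClosedAppR R ∧ G.ClosedAbs R

/-- A blind bisimulation is a homogeneous relation closed under the propagation rules. -/
def BlindBisimulation (G : PreLamGraph Node Name) (R : Node → Node → Prop) : Prop :=
  G.Homogeneous R ∧ G.ClosedProp R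

/-- A bisimulation is a homogeneous relation closed under the propagation rules
and the scoping rule. -/
def Bisimulation (G : PreLamGraph Node Name) (R : Node → Node → Prop) : Prop :=
  G.BlindBisimulation R ∧ G.ClosedScope R

/-- A relation is open if whenever it relates two free variable nodes they are equal. -/
def OpenRel (G : PreLamGraph Node Name) (R : Node → Node → Prop) : Prop :=
  ∀ n m a b, G.label n = .fvar a → G.label m = .fvar b → R n m → n = m

/-- A sharing equivalence is an open bisimulation that is also an equivalence relation. -/
def SharingEquivalence (G : PreLamGraph Node Name) (R : Node → Node → Prop) : Prop :=
  G.OpenRel R ∧ G.Bisimulation R ∧ Equivalence R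

/-- A blind sharing equivalence is an equivalence relation that is a blind bisimulation. -/
def BlindSharingEquivalence (G : PreLamGraph Node Name) (R : Node → Node → Prop) : Prop :=
  Equivalence R ∧ G.BlindBisimulation R

/-- The propagation `R↓`: the smallest relation containing `R` and closed under the
propagation rules. -/
inductive Propagation (G : PreLamGraph Node Name) (R : Node → Node → Prop) :
    Node → Node → Prop where
  | base {n m : Node} : R n m → Propagation G R n m
  | appL {n m n1 n2 m1 m2 : Node} :
      Propagation G R n m → G.label n = .app n1 n2 → G.label m = .app m1 m2 →
      Propagation G R n1 m1
  | appR {n m n1 n2 m1 m2 : Node} :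
      Propagation G R n m → G.label n = .app n1 n2 → G.label m = .app m1 m2 →
      Propagation G R n2 m2
  | abs {n m n' m' : Node} :
      Propagation G R n m → G.label n = .abs n' → G.label m = .abs m' →
      Propagation G R n' m'

/-- The spreading `R⇓`: the smallest equivalence relation containing `R` and closed
under the propagation rules. -/
inductive Spreading (G : PreLamGraph Node Name) (R : Node → Node → Prop) :
    Node → Node → Prop where
  | base {n m : Node} : R n m → Spreading G R n m
  | refl (n : Node) : Spreading G R n n
  | symm {n m : Node} : Spreading G R n m → Spreading G R m n
  | trans {n m p : Node} : Spreading G R n m → Spreading G R m p → Spreading G R n p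
  | appL {n m n1 n2 m1 m2 : Node} :
      Spreading G R n m → G.label n = .app n1 n2 → G.label m = .app m1 m2 →
      Spreading G R n1 m1
  | appR {n m n1 n2 m1 m2 : Node} :
      Spreading G R n m → G.label n = .app n1 n2 → G.label m = .app m1 m2 →
      Spreading G R n2 m2
  | abs {n m n' m' : Node} :
      Spreading G R n m → G.label n = .abs n' → G.label m = .abs m' →
      Spreading G R n' m'

/-- `IndexOf G l n τ k`: the de Bruijn index of the abstraction node `l` along the path
from `n` with trace `τ` (which crosses `l`) is `k`. -/
inductive IndexOf (G : PreLamGraph Node Name) (l n : Node) : List Dir → ℕ → Prop where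
  | here {τ : List Dir} : G.Path τ n l → IndexOf G l n τ 0
  | abs {d : Dir} {τ : List Dir} {m b : Node} {k : ℕ} :
      G.Path (d :: τ) n m → G.label m = .abs b → m ≠ l →
      IndexOf G l n τ k → IndexOf G l n (d :: τ) (k + 1)
  | other {d : Dir} {τ : List Dir} {m : Node} {k : ℕ} :
      G.Path (d :: τ) n m → (∀ b, G.label m ≠ .abs b) →
      IndexOf G l n τ k → IndexOf G l n (d :: τ) k

/-- `Readback G r τ t`: the readback of the endpoint of the access path from `r` with
trace `τ` is the locally nameless term `t`. -/
inductive Readback (G : PreLamGraph Node Name) (r : Node) : List Dir → Term Name → Prop where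
  | bvar {τ : List Dir} {n l : Node} {k : ℕ} :
      G.Path τ r n → G.label n = .bvar l → G.IndexOf l r τ k →
      Readback G r τ (.bvar k)
  | fvar {τ : List Dir} {n : Node} {a : Name} :
      G.Path τ r n → G.label n = .fvar a → Readback G r τ (.fvar a)
  | abs {τ : List Dir} {n b : Node} {t : Term Name} :
      G.Path τ r n → G.label n = .abs b → Readback G r (.body :: τ) t →
      Readback G r τ (.lam t)
  | app {τ : List Dir} {n n1 n2 : Node} {t1 t2 : Term Name} :
      G.Path τ r n → G.label n = .app n1 n2 →
      Readback G r (.left :: τ) t1 → Readback G r (.right :: τ) t2 →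
      Readback G r τ (.app t1 t2)

end PreLamGraph

/-- A λ-graph: a finite, acyclic and dominated pre–λ-graph. -/
structure LamGraph (Node Name : Type) extends PreLamGraph Node Name where
  finite : Finite Node
  acyclic : toPreLamGraph.Acyclic
  dominated : toPreLamGraph.Dominated
section NoTrianglesAux

open PreLamGraph

variable {Node Name : Type}

lemma NodeLabel.kind_eq_abs {l : NodeLabel Node Name} (h : l.kind = .abs) :
    ∃ b, l = .abs b := by cases l <;> simp_all [NodeLabel.kind]

lemma NodeLabel.kind_eq_app {l : NodeLabel Node Name} (h : l.kind = .app) :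
    ∃ x y, l = .app x y := by cases l <;> simp_all [NodeLabel.kind]

lemma PreLamGraph.Path.comp {G : PreLamGraph Node Name} {σ ρ : List Dir} {a b c : Node}
    (h1 : G.Path σ a b) (h2 : G.Path ρ b c) : G.Path (ρ ++ σ) a c := by
  induction h2 with
  | nil => exact h1
  | abs hp hl ih => exact .abs (ih h1) hl
  | appL hp hl ih => exact .appL (ih h1) hl
  | appR hp hl ih => exact .appR (ih h1) hl

/-- Follow a path on the left component of a blind bisimulation. -/
lemma follow_left {G : PreLamGraph Node Name} {R : Node → Node → Prop}
    (hR : G.BlindBisimulation R) {τ : List Dir} {a a' : Node}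
    (hp : G.Path τ a a') : ∀ b, R a b → ∃ b', G.Path τ b b' ∧ R a' b' := by
  induction hp with
  | nil => exact fun b h => ⟨b, .nil b, h⟩
  | abs hp hl ih =>
    intro b h
    obtain ⟨b₁, hpb, hr⟩ := ih b h
    have hk := hR.1 _ _ hr
    rw [hl] at hk
    obtain ⟨bb, hlb⟩ := NodeLabel.kind_eq_abs hk.symm
    exact ⟨bb, .abs hpb hlb, hR.2.2.2 _ _ _ _ hl hlb hr⟩
  | appL hp hl ih =>
    intro b h
    obtain ⟨b₁, hpb, hr⟩ := ih b h
    have hk := hR.1 _ _ hr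
    rw [hl] at hk
    obtain ⟨x, y, hlb⟩ := NodeLabel.kind_eq_app hk.symm
    exact ⟨x, .appL hpb hlb, hR.2.1 _ _ _ _ _ _ hl hlb hr⟩
  | appR hp hl ih =>
    intro b h
    obtain ⟨b₁, hpb, hr⟩ := ih b h
    have hk := hR.1 _ _ hr
    rw [hl] at hk
    obtain ⟨x, y, hlb⟩ := NodeLabel.kind_eq_app hk.symm
    exact ⟨y, .appR hpb hlb, hR.2.2.1 _ _ _ _ _ _ hl hlb hr⟩

/-- Follow a path on the right component of a blind bisimulation. -/
lemma follow_right {G : PreLamGraph Node Name} {R : Node → Node → Prop}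
    (hR : G.BlindBisimulation R) {τ : List Dir} {b b' : Node}
    (hp : G.Path τ b b') : ∀ a, R a b → ∃ a', G.Path τ a a' ∧ R a' b' := by
  induction hp with
  | nil => exact fun a h => ⟨a, .nil a, h⟩
  | abs hp hl ih =>
    intro a h
    obtain ⟨a₁, hpa, hr⟩ := ih a h
    have hk := hR.1 _ _ hr
    rw [hl] at hk
    obtain ⟨aa, hla⟩ := NodeLabel.kind_eq_abs hk
    exact ⟨aa, .abs hpa hla, hR.2.2.2 _ _ _ _ hla hl hr⟩
  | appL hp hl ih =>
    intro a h
    obtain ⟨a₁, hpa, hr⟩ := ih a h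
    have hk := hR.1 _ _ hr
    rw [hl] at hk
    obtain ⟨x, y, hla⟩ := NodeLabel.kind_eq_app hk
    exact ⟨x, .appL hpa hla, hR.2.1 _ _ _ _ _ _ hla hl hr⟩
  | appR hp hl ih =>
    intro a h
    obtain ⟨a₁, hpa, hr⟩ := ih a h
    have hk := hR.1 _ _ hr
    rw [hl] at hk
    obtain ⟨x, y, hla⟩ := NodeLabel.kind_eq_app hk
    exact ⟨y, .appR hpa hla, hR.2.2.1 _ _ _ _ _ _ hla hl hr⟩

end NoTrianglesAux

open PreLamGraph in
/-- No Triangles. -/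
theorem no_triangles {Node Name : Type} (G : LamGraph Node Name)
    (R : Node → Node → Prop) (hR : G.toPreLamGraph.BlindBisimulation R)
    (n m m' : Node) (τ : List Dir) (hτ : τ ≠ [])
    (hnm : R n m) (hp : Path G.toPreLamGraph τ m m') :
    ¬ R n m' := by
  intro hnm'
  classical
  haveI := G.finite
  set P : Node → Node → Prop :=
    fun b b' => G.toPreLamGraph.Path τ b b' ∧ ∃ a, R a b ∧ R a b' with hP
  have hstep : ∀ p : {p : Node × Node // P p.1 p.2},
      ∃ b'', P p.1.2 b'' := by
    rintro ⟨⟨b, b'⟩, hpath, a, hab, hab'⟩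
    obtain ⟨a', hpa, ha'b'⟩ := follow_right hR hpath a hab
    obtain ⟨b'', hpb, ha'b''⟩ := follow_left hR hpa b' hab'
    exact ⟨b'', hpb, a', ha'b', ha'b''⟩
  let f : ℕ → {p : Node × Node // P p.1 p.2} := fun k =>
    Nat.rec ⟨(m, m'), hp, n, hnm, hnm'⟩
      (fun _ prev => ⟨(prev.1.2, Classical.choose (hstep prev)),
        Classical.choose_spec (hstep prev)⟩) k
  let g : ℕ → Node := fun k => (f k).1.1
  have hgstep : ∀ k, G.toPreLamGraph.Path τ (g k) (g (k + 1)) := by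
    intro k
    have : g (k + 1) = (f k).1.2 := rfl
    rw [this]
    exact (f k).2.1
  have hcomp : ∀ k i, ∃ σ : List Dir,
      G.toPreLamGraph.Path σ (g i) (g (i + k)) ∧ σ.length = k * τ.length := by
    intro k
    induction k with
    | zero => exact fun i => ⟨[], .nil _, by simp⟩
    | succ k ih =>
      intro i
      obtain ⟨σ, hσ, hlen⟩ := ih i
      refine ⟨τ ++ σ, ?_, by simp [hlen]; ring⟩
      have : i + (k + 1) = (i + k) + 1 := by omega
      rw [this]
      exact hσ.comp (hgstep (i + k))
  obtain ⟨i, j, hne, heq⟩ := Finite.exists_ne_map_eq_of_infinite g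
  have key : ∀ i j : ℕ, i < j → g i = g j → False := by
    intro i j hij hgij
    obtain ⟨σ, hσ, hlen⟩ := hcomp (j - i) i
    rw [show i + (j - i) = j by omega, ← hgij] at hσ
    have := G.acyclic _ _ hσ
    subst this
    have h1 : 0 < (j - i) * τ.length :=
      Nat.mul_pos (by omega) (List.length_pos_iff.mpr hτ)
    rw [← hlen] at h1
    simp at h1
  rcases hne.lt_or_gt with h | h
  · exact key _ _ h heq
  · exact key _ _ h heq.symm
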